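/- Let τ(n1,n2,n3,n4) be the Casoratian in the direction n1 of the vector ψ with entries ψ_j(n1,n2,n3,n4) = ρ_j^+ ∏_{i=1}^4 (a_i+k_j)^{n_i} + ρ_j^- ∏_{i=1}^4 (a_i−k_j)^{n_i}. Then τ satisfies the four reflected 4D discrete AKP equations at every point: 𝔄1 := (a2−a3)(a3−a4)(a2−a4) τ τ_1234 − (a1+a3)(a3−a4)(a1+a4) τ_12 τ_34 + (a1+a2)(a2−a4)(a1+a4) τ_13 τ_24 − (a1+a2)(a2−a3)(a1+a3) τ_14 τ_23 = 0; 𝔄2 := (a2+a3)(a3−a4)(a2+a4) τ_12 τ_34 − (a1−a3)(a3−a4)(a1−a4) τ τ_1234 − (a1+a2)(a2+a4)(a1−a4) τ_23 τ_14 + (a1+a2)(a2+a3)(a1−a3) τ_24 τ_13 = 0; 𝔄3 := −(a2+a3)(a3+a4)(a2−a4) τ_13 τ_24 + (a1+a3)(a3+a4)(a1−a4) τ_23 τ_14 + (a1−a2)(a2−a4)(a1−a4) τ τ_1234 − (a1−a2)(a2+a3)(a1+a3) τ_34 τ_12 = 0; and 𝔄4 := (a2−a3)(a3+a4)(a2+a4)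 τ_14 τ_23 − (a1−a3)(a3+a4)(a1+a4) τ_24 τ_13 + (a1−a2)(a2+a4)(a1+a4) τ_34 τ_12 − (a1−a2)(a2−a3)(a1−a3) τ τ_1234 = 0. -/

import Mathlib

/-!
Write `T` for the shift `n1 ↦ n1 + 1` and `Δ_z = T - z`. In `n1` each `ψ_j` is a sum of two
exponentials with ratios `a1 ± k_j`, so a shift in `n_i` acts on the `n1`-sequence as
`Δ_{a1 - a_i}`, and `Δ_{a1 + a_i} Δ_{a1 - a_i}` multiplies `ψ_j` by `k_j ^ 2 - a_i ^ 2`. Hence all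
the τ's in `𝔄_i` are, up to the factor `∏ j, (k_j ^ 2 - a_i ^ 2)`, Casoratians of `Δ`-images of
the single sequence `n1 ↦ ψ(n + e_i)`.

Bordering a Casoratian with geometric rows `(w_t ^ m)_m` and clearing them by column differences
gives the Vandermonde of the `w_t` times the Casoratian of `Δ_{w_{d-1}} ⋯ Δ_{w_0} u`. Expanding
a determinant whose first column is a combination of the other columns yields a Plücker relation
between such bordered Casoratians; with four parameters it is a four-term bilinear identity for
Casoratians, and each `𝔄_i` is an instance of it.
-/

open Matrix Finset

namespace Matrix

variable {R : Type*} [CommRing R]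

theorem det_eq_det_of_row_zero_eq_pow {n : ℕ} (A : Matrix (Fin (n + 1)) (Fin (n + 1)) R) (z : R)
    (hA : ∀ m, A 0 m = z ^ (m : ℕ)) :
    A.det = (of fun i m : Fin n => A i.succ m.succ - z * A i.succ m.castSucc).det := by
  let B : Matrix (Fin (n + 1)) (Fin (n + 1)) R :=
    of fun i => Fin.cons (A i 0) fun m => A i m.succ - z * A i m.castSucc
  have hB : A.det = B.det :=
    det_eq_of_forall_col_eq_smul_add_pred (fun _ => z) (fun _ => rfl)
      fun i m => by simp [B]
  rw [hB, det_succ_row_zero, Fin.sum_univ_succ, Finset.sum_eq_zero, add_zero]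
  · simp only [B, of_apply, Fin.cons_zero, hA, Fin.val_zero, pow_zero, mul_one, one_mul,
      Fin.succAbove_zero]
    rfl
  · intro m _
    simp [B, hA, pow_succ, mul_comm]

theorem sum_neg_one_pow_mul_det_smul_eq_zero {n : ℕ} (f : Fin (n + 1) → Fin n → R) :
    ∑ i : Fin (n + 1), ((-1) ^ (i : ℕ) * (of fun i' => f (i.succAbove i')).det) • f i = 0 := by
  funext r
  let A : Matrix (Fin (n + 1)) (Fin (n + 1)) R := of fun i => Fin.cons (f i r) (f i)
  have hA : A.det = 0 := det_zero_of_column_eq (Fin.succ_ne_zero r).symm fun i => rfl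
  rw [det_succ_column_zero] at hA
  simp only [Finset.sum_apply, Pi.smul_apply, smul_eq_mul, Pi.zero_apply, ← hA]
  refine Finset.sum_congr rfl fun i _ => ?_
  change _ = (-1) ^ (i : ℕ) * f i r * (of fun i' => f (i.succAbove i')).det
  ring

end Matrix

namespace Casoratian

variable {R : Type*} [CommRing R] {N : ℕ}

def casoratian (u : ℕ → Fin N → R) : R :=
  (of fun j (m : Fin N) => u m j).det

def shiftSub (z : R) (u : ℕ → Fin N → R) : ℕ → Fin N → R :=
  fun m => u (m + 1) - z • u m

theorem casoratian_mul (c : Fin N → R) (u : ℕ → Fin N → R) :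
    casoratian (fun m => c * u m) = (∏ j, c j) * casoratian u :=
  det_mul_column c _

theorem shiftSub_add_shiftSub_sub {u : ℕ → Fin N → R} {a b : R} {κ : Fin N → R}
    (hu : ∀ m j, u (m + 2) j = 2 * a * u (m + 1) j + (κ j ^ 2 - a ^ 2) * u m j) :
    shiftSub (a + b) (shiftSub (a - b) u) = fun m => (fun j => κ j ^ 2 - b ^ 2) * u m := by
  funext m j
  simp only [shiftSub, Pi.sub_apply, Pi.smul_apply, smul_eq_mul, Pi.mul_apply, hu]
  ring

def iterShiftSub : (d : ℕ) → (Fin d → R) → (ℕ → Fin N → R) → ℕ → Fin N → R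
  | 0, _, u => u
  | d + 1, w, u => iterShiftSub d (fun i => w i.succ) (shiftSub (w 0) u)

/-- Rows `0, …, d - 1` are the geometric rows `m ↦ w t ^ m`, the last `N` rows come from `u`. -/
def borderedRows (u : ℕ → Fin N → R) : (d : ℕ) → (Fin d → R) → Fin (N + d) → ℕ → R
  | 0, _ => fun j m => u m j
  | d + 1, w => Fin.cons (fun m => w 0 ^ m) (borderedRows u d fun i => w i.succ)

def borderedMatrix (u : ℕ → Fin N → R) (d : ℕ) (w : Fin d → R) :
    Matrix (Fin (N + d)) (Fin (N + d)) R :=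
  of fun i m => borderedRows u d w i m

def borderedScale (z : R) : (d : ℕ) → (Fin d → R) → Fin (N + d) → R
  | 0, _ => 1
  | d + 1, w => Fin.cons (w 0 - z) (borderedScale z d fun i => w i.succ)

theorem prod_borderedScale (z : R) (d : ℕ) (w : Fin d → R) :
    ∏ i, borderedScale (N := N) z d w i = ∏ t, (w t - z) := by
  induction d with
  | zero => simp [borderedScale]
  | succ d ih =>
    refine (Fin.prod_univ_succ (n := N + d) (borderedScale z (d + 1) w)).trans ?_
    simp [borderedScale, ih, Fin.prod_univ_succ]

theorem borderedRows_succ_sub (u : ℕ → Fin N → R) (z : R) (d : ℕ) (w : Fin d → R)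
    (i : Fin (N + d)) (m : ℕ) :
    borderedRows u d w i (m + 1) - z * borderedRows u d w i m =
      borderedScale z d w i * borderedRows (shiftSub z u) d w i m := by
  induction d with
  | zero => simp [borderedRows, borderedScale, shiftSub]
  | succ d ih =>
    cases i using Fin.cases with
    | zero =>
      simp only [borderedRows, borderedScale, Fin.cons_zero]
      ring
    | succ i => simpa [borderedRows, borderedScale] using ih _ i

theorem det_borderedMatrix_succ (u : ℕ → Fin N → R) (d : ℕ) (w : Fin (d + 1) → R) :
    (borderedMatrix u (d + 1) w).det =
      (∏ t : Fin d, (w t.succ - w 0)) *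
        (borderedMatrix (shiftSub (w 0) u) d fun i => w i.succ).det := by
  rw [det_eq_det_of_row_zero_eq_pow _ (w 0) fun m => rfl, ← prod_borderedScale (N := N),
    ← det_mul_column]
  congr 1
  ext i m
  exact borderedRows_succ_sub u (w 0) d (fun i => w i.succ) i m

theorem det_borderedMatrix (u : ℕ → Fin N → R) (d : ℕ) (w : Fin d → R) :
    (borderedMatrix u d w).det =
      (∏ i, ∏ j ∈ Ioi i, (w j - w i)) * casoratian (iterShiftSub d w u) := by
  induction d generalizing u with
  | zero => simp [borderedMatrix, borderedRows, casoratian, iterShiftSub]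
  | succ d ih =>
    rw [det_borderedMatrix_succ, ih, Fin.prod_univ_succ, Fin.prod_Ioi_zero]
    simp only [Fin.prod_Ioi_succ, iterShiftSub]
    ring

theorem borderedRows_castLE (u : ℕ → Fin N → R) (d : ℕ) (w : Fin d → R) (l : Fin d)
    (h : d ≤ N + d) : borderedRows u d w (Fin.castLE h l) = fun m => w l ^ m := by
  induction d with
  | zero => exact l.elim0
  | succ d ih =>
    cases l using Fin.cases with
    | zero => rfl
    | succ l => simpa [Fin.castLE_succ, borderedRows] using ih _ l (by omega)

theorem borderedRows_of_le (u : ℕ → Fin N → R) (d : ℕ) (w : Fin d → R) (i : Fin (N + d))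
    (hi : d ≤ i) : borderedRows u d w i = fun m => u m ⟨i - d, by omega⟩ := by
  induction d with
  | zero => rfl
  | succ d ih =>
    cases i using Fin.cases with
    | zero => simp at hi
    | succ i =>
      simp only [Fin.val_succ] at hi
      simpa [borderedRows] using ih _ i (by omega)

theorem borderedRows_comp_succAbove (u : ℕ → Fin N → R) (d : ℕ) (w : Fin (d + 1) → R)
    (l : Fin (d + 1)) (h : d + 1 ≤ N + (d + 1)) :
    borderedRows u (d + 1) w ∘ (Fin.castLE h l).succAbove = borderedRows u d (w ∘ l.succAbove) := by
  induction d with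
  | zero =>
    obtain rfl : l = 0 := Fin.fin_one_eq_zero l
    rfl
  | succ d ih =>
    cases l using Fin.cases with
    | zero => rfl
    | succ l =>
      funext i
      cases i using Fin.cases with
      | zero => simp [Fin.castLE_succ, borderedRows]
      | succ i =>
        have := congrFun (ih (fun i => w i.succ) l (by omega)) i
        simp only [Fin.castLE_succ, Fin.succ_succAbove_succ, Function.comp_apply, borderedRows,
          Fin.cons_succ] at this ⊢
        exact this

theorem det_cons_pow_eq_casoratian_shiftSub (u : ℕ → Fin N → R) (z : R) :
    (of (Fin.cons (fun m : Fin (N + 1) => z ^ (m : ℕ)) fun j m => u m j)).det =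
      casoratian (shiftSub z u) := by
  rw [det_eq_det_of_row_zero_eq_pow _ z fun _ => rfl]
  rfl

theorem sum_neg_one_pow_mul_det_borderedMatrix_mul_casoratian (u : ℕ → Fin N → R) (d : ℕ)
    (w : Fin (d + 2) → R) :
    ∑ l : Fin (d + 2), (-1) ^ (l : ℕ) * (borderedMatrix u (d + 1) (w ∘ l.succAbove)).det *
      casoratian (shiftSub (w l) u) = 0 := by
  let U : Fin N → Fin (N + 1) → R := fun j m => u m j
  have hle : N + 1 ≤ N + (d + 1) := by omega
  -- `φ` kills the rows coming from `u` and turns a geometric row into a Casoratian.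
  let φ : (Fin (N + (d + 1)) → R) →ₗ[R] R :=
    (detRowAlternating.toMultilinearMap.toLinearMap (Fin.cons 0 U) 0).comp
      (LinearMap.funLeft R R (Fin.castLE hle))
  have hφ : ∀ x, φ x = (of (Fin.cons (fun m => x (Fin.castLE hle m)) U)).det := by
    intro x
    simp only [φ, LinearMap.coe_comp, Function.comp_apply, MultilinearMap.toLinearMap_apply,
      Fin.update_cons_zero]
    rfl
  let f : Fin (N + (d + 2)) → Fin (N + (d + 1)) → R := fun i m => borderedRows u (d + 2) w i m
  have key := congrArg φ (sum_neg_one_pow_mul_det_smul_eq_zero (n := N + (d + 1)) f)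
  simp only [map_sum, map_smul, smul_eq_mul, map_zero] at key
  rw [← key]
  refine Fintype.sum_of_injective (Fin.castLE (by omega)) (Fin.castLE_injective _) _ _ ?_ ?_
  · intro i hi
    have hi : d + 2 ≤ i := by
      by_contra h
      exact hi ⟨⟨i, by omega⟩, rfl⟩
    have hφi : φ (f i) = 0 := by
      rw [hφ]
      refine det_zero_of_row_eq (i := 0) (j := Fin.succ ⟨i - (d + 2), by omega⟩)
        (Fin.succ_ne_zero _).symm ?_
      funext m
      simp only [f, borderedRows_of_le u (d + 2) w i hi]
      rfl
    rw [hφi, mul_zero]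
  · intro l
    have hminor :
        (of fun i' => f ((Fin.castLE (show d + 2 ≤ N + (d + 2) by omega) l).succAbove i')) =
          borderedMatrix u (d + 1) (w ∘ l.succAbove) := by
      ext i' m
      exact congrFun (congrFun (borderedRows_comp_succAbove u (d + 1) w l (by omega)) i') m
    rw [hφ, Fin.val_castLE, ← hminor]
    simp only [f, borderedRows_castLE, Fin.val_castLE]
    rw [det_cons_pow_eq_casoratian_shiftSub]
    rfl

theorem det_borderedMatrix_three (u : ℕ → Fin N → R) (x y z : R) :
    (borderedMatrix u 3 ![x, y, z]).det =
      (y - x) * (z - x) * (z - y) * casoratian (shiftSub z (shiftSub y (shiftSub x u))) := by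
  simp [det_borderedMatrix, Fin.prod_univ_succ, iterShiftSub]

theorem casoratian_four_term (u : ℕ → Fin N → R) (w0 w1 w2 w3 : R) :
    (w2 - w1) * (w3 - w1) * (w3 - w2) * casoratian (shiftSub w3 (shiftSub w2 (shiftSub w1 u))) *
        casoratian (shiftSub w0 u) -
      (w2 - w0) * (w3 - w0) * (w3 - w2) * casoratian (shiftSub w3 (shiftSub w2 (shiftSub w0 u))) *
        casoratian (shiftSub w1 u) +
      (w1 - w0) * (w3 - w0) * (w3 - w1) * casoratian (shiftSub w3 (shiftSub w1 (shiftSub w0 u))) *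
        casoratian (shiftSub w2 u) -
      (w1 - w0) * (w2 - w0) * (w2 - w1) * casoratian (shiftSub w2 (shiftSub w1 (shiftSub w0 u))) *
        casoratian (shiftSub w3 u) = 0 := by
  have h := sum_neg_one_pow_mul_det_borderedMatrix_mul_casoratian u 2 ![w0, w1, w2, w3]
  have e0 : ![w0, w1, w2, w3] ∘ Fin.succAbove 0 = ![w1, w2, w3] := by ext i; fin_cases i <;> rfl
  have e1 : ![w0, w1, w2, w3] ∘ Fin.succAbove 1 = ![w0, w2, w3] := by ext i; fin_cases i <;> rfl
  have e2 : ![w0, w1, w2, w3] ∘ Fin.succAbove 2 = ![w0, w1, w3] := by ext i; fin_cases i <;> rfl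
  have e3 : ![w0, w1, w2, w3] ∘ Fin.succAbove 3 = ![w0, w1, w2] := by ext i; fin_cases i <;> rfl
  rw [Fin.sum_univ_four, e0, e1, e2, e3] at h
  rw [det_borderedMatrix_three, det_borderedMatrix_three, det_borderedMatrix_three,
    det_borderedMatrix_three] at h
  simp only [Matrix.cons_val, Fin.coe_ofNat_eq_mod] at h
  linear_combination h

end Casoratian

namespace PlaneWave

open Casoratian

variable {K : Type*} [Field K] {N : ℕ}

def planeWave (a1 a2 a3 a4 : K) (k ρp ρm : Fin N → K) (j : Fin N) (n1 n2 n3 n4 : ℤ) : K :=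
  ρp j * (a1 + k j) ^ n1 * (a2 + k j) ^ n2 * (a3 + k j) ^ n3 * (a4 + k j) ^ n4 +
    ρm j * (a1 - k j) ^ n1 * (a2 - k j) ^ n2 * (a3 - k j) ^ n3 * (a4 - k j) ^ n4

def alongFirst {α : Type*} (ψ : Fin N → ℤ → ℤ → ℤ → ℤ → α) (n1 n2 n3 n4 : ℤ) : ℕ → Fin N → α :=
  fun m j => ψ j (n1 + m) n2 n3 n4

variable {a1 a2 a3 a4 : K} {k ρp ρm : Fin N → K}

theorem shiftSub_sub_self_alongFirst {R : Type*} [CommRing R] (ψ : Fin N → ℤ → ℤ → ℤ → ℤ → R)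
    (a : R) (n1 n2 n3 n4 : ℤ) :
    shiftSub (a - a) (alongFirst ψ n1 n2 n3 n4) = alongFirst ψ (n1 + 1) n2 n3 n4 := by
  funext m j
  simp [shiftSub, alongFirst, ← add_assoc, add_right_comm n1 1]

theorem alongFirst_planeWave_add_two (ha1 : ∀ j, a1 + k j ≠ 0) (ha1' : ∀ j, a1 - k j ≠ 0)
    (n1 n2 n3 n4 : ℤ) (m : ℕ) (j : Fin N) :
    alongFirst (planeWave a1 a2 a3 a4 k ρp ρm) n1 n2 n3 n4 (m + 2) j =
      2 * a1 * alongFirst (planeWave a1 a2 a3 a4 k ρp ρm) n1 n2 n3 n4 (m + 1) j +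
        (k j ^ 2 - a1 ^ 2) * alongFirst (planeWave a1 a2 a3 a4 k ρp ρm) n1 n2 n3 n4 m j := by
  simp only [alongFirst, planeWave, Nat.cast_add, Nat.cast_ofNat, Nat.cast_one, ← add_assoc,
    zpow_add_one₀ (ha1 j), zpow_add_one₀ (ha1' j), show (2 : ℤ) = 1 + 1 from rfl]
  ring

theorem shiftSub_sub_alongFirst_planeWave_two (ha1 : ∀ j, a1 + k j ≠ 0)
    (ha1' : ∀ j, a1 - k j ≠ 0) (ha2 : ∀ j, a2 + k j ≠ 0) (ha2' : ∀ j, a2 - k j ≠ 0)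
    (n1 n2 n3 n4 : ℤ) :
    shiftSub (a1 - a2) (alongFirst (planeWave a1 a2 a3 a4 k ρp ρm) n1 n2 n3 n4) =
      alongFirst (planeWave a1 a2 a3 a4 k ρp ρm) n1 (n2 + 1) n3 n4 := by
  funext m j
  simp only [shiftSub, alongFirst, planeWave, Pi.sub_apply, Pi.smul_apply, smul_eq_mul,
    Nat.cast_add, Nat.cast_one, ← add_assoc, zpow_add_one₀ (ha1 j), zpow_add_one₀ (ha1' j),
    zpow_add_one₀ (ha2 j), zpow_add_one₀ (ha2' j)]
  ring

theorem shiftSub_sub_alongFirst_planeWave_three (ha1 : ∀ j, a1 + k j ≠ 0)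
    (ha1' : ∀ j, a1 - k j ≠ 0) (ha3 : ∀ j, a3 + k j ≠ 0) (ha3' : ∀ j, a3 - k j ≠ 0)
    (n1 n2 n3 n4 : ℤ) :
    shiftSub (a1 - a3) (alongFirst (planeWave a1 a2 a3 a4 k ρp ρm) n1 n2 n3 n4) =
      alongFirst (planeWave a1 a2 a3 a4 k ρp ρm) n1 n2 (n3 + 1) n4 := by
  funext m j
  simp only [shiftSub, alongFirst, planeWave, Pi.sub_apply, Pi.smul_apply, smul_eq_mul,
    Nat.cast_add, Nat.cast_one, ← add_assoc, zpow_add_one₀ (ha1 j), zpow_add_one₀ (ha1' j),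
    zpow_add_one₀ (ha3 j), zpow_add_one₀ (ha3' j)]
  ring

theorem shiftSub_sub_alongFirst_planeWave_four (ha1 : ∀ j, a1 + k j ≠ 0)
    (ha1' : ∀ j, a1 - k j ≠ 0) (ha4 : ∀ j, a4 + k j ≠ 0) (ha4' : ∀ j, a4 - k j ≠ 0)
    (n1 n2 n3 n4 : ℤ) :
    shiftSub (a1 - a4) (alongFirst (planeWave a1 a2 a3 a4 k ρp ρm) n1 n2 n3 n4) =
      alongFirst (planeWave a1 a2 a3 a4 k ρp ρm) n1 n2 n3 (n4 + 1) := by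
  funext m j
  simp only [shiftSub, alongFirst, planeWave, Pi.sub_apply, Pi.smul_apply, smul_eq_mul,
    Nat.cast_add, Nat.cast_one, ← add_assoc, zpow_add_one₀ (ha1 j), zpow_add_one₀ (ha1' j),
    zpow_add_one₀ (ha4 j), zpow_add_one₀ (ha4' j)]
  ring

theorem shiftSub_add_alongFirst_planeWave_one (ha1 : ∀ j, a1 + k j ≠ 0)
    (ha1' : ∀ j, a1 - k j ≠ 0) (n1 n2 n3 n4 : ℤ) :
    shiftSub (a1 + a1) (alongFirst (planeWave a1 a2 a3 a4 k ρp ρm) (n1 + 1) n2 n3 n4) =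
      fun m =>
        (fun j => k j ^ 2 - a1 ^ 2) * alongFirst (planeWave a1 a2 a3 a4 k ρp ρm) n1 n2 n3 n4 m := by
  rw [← shiftSub_sub_self_alongFirst,
    shiftSub_add_shiftSub_sub (alongFirst_planeWave_add_two ha1 ha1' _ _ _ _)]

theorem shiftSub_add_alongFirst_planeWave_two (ha1 : ∀ j, a1 + k j ≠ 0)
    (ha1' : ∀ j, a1 - k j ≠ 0) (ha2 : ∀ j, a2 + k j ≠ 0) (ha2' : ∀ j, a2 - k j ≠ 0)
    (n1 n2 n3 n4 : ℤ) :
    shiftSub (a1 + a2) (alongFirst (planeWave a1 a2 a3 a4 k ρp ρm) n1 (n2 + 1) n3 n4) =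
      fun m =>
        (fun j => k j ^ 2 - a2 ^ 2) * alongFirst (planeWave a1 a2 a3 a4 k ρp ρm) n1 n2 n3 n4 m := by
  rw [← shiftSub_sub_alongFirst_planeWave_two ha1 ha1' ha2 ha2',
    shiftSub_add_shiftSub_sub (alongFirst_planeWave_add_two ha1 ha1' _ _ _ _)]

theorem shiftSub_add_alongFirst_planeWave_three (ha1 : ∀ j, a1 + k j ≠ 0)
    (ha1' : ∀ j, a1 - k j ≠ 0) (ha3 : ∀ j, a3 + k j ≠ 0) (ha3' : ∀ j, a3 - k j ≠ 0)
    (n1 n2 n3 n4 : ℤ) :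
    shiftSub (a1 + a3) (alongFirst (planeWave a1 a2 a3 a4 k ρp ρm) n1 n2 (n3 + 1) n4) =
      fun m =>
        (fun j => k j ^ 2 - a3 ^ 2) * alongFirst (planeWave a1 a2 a3 a4 k ρp ρm) n1 n2 n3 n4 m := by
  rw [← shiftSub_sub_alongFirst_planeWave_three ha1 ha1' ha3 ha3',
    shiftSub_add_shiftSub_sub (alongFirst_planeWave_add_two ha1 ha1' _ _ _ _)]

theorem shiftSub_add_alongFirst_planeWave_four (ha1 : ∀ j, a1 + k j ≠ 0)
    (ha1' : ∀ j, a1 - k j ≠ 0) (ha4 : ∀ j, a4 + k j ≠ 0) (ha4' : ∀ j, a4 - k j ≠ 0)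
    (n1 n2 n3 n4 : ℤ) :
    shiftSub (a1 + a4) (alongFirst (planeWave a1 a2 a3 a4 k ρp ρm) n1 n2 n3 (n4 + 1)) =
      fun m =>
        (fun j => k j ^ 2 - a4 ^ 2) * alongFirst (planeWave a1 a2 a3 a4 k ρp ρm) n1 n2 n3 n4 m := by
  rw [← shiftSub_sub_alongFirst_planeWave_four ha1 ha1' ha4 ha4',
    shiftSub_add_shiftSub_sub (alongFirst_planeWave_add_two ha1 ha1' _ _ _ _)]

theorem prod_sq_sub_sq_ne_zero {a : K} (h : ∀ j, a + k j ≠ 0) (h' : ∀ j, a - k j ≠ 0) :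
    ∏ j, (k j ^ 2 - a ^ 2) ≠ 0 :=
  Finset.prod_ne_zero_iff.mpr fun j _ => by
    rw [show k j ^ 2 - a ^ 2 = -((a + k j) * (a - k j)) by ring]
    exact neg_ne_zero.mpr (mul_ne_zero (h j) (h' j))

end PlaneWave

open Casoratian PlaneWave in
theorem stmt_15_general (N : ℕ) (a1 a2 a3 a4 : ℂ) (k ρp ρm : Fin N → ℂ)
    (ha1 : ∀ j, a1 + k j ≠ 0) (ha1' : ∀ j, a1 - k j ≠ 0)
    (ha2 : ∀ j, a2 + k j ≠ 0) (ha2' : ∀ j, a2 - k j ≠ 0)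
    (ha3 : ∀ j, a3 + k j ≠ 0) (ha3' : ∀ j, a3 - k j ≠ 0)
    (ha4 : ∀ j, a4 + k j ≠ 0) (ha4' : ∀ j, a4 - k j ≠ 0)
    (ψ : Fin N → ℤ → ℤ → ℤ → ℤ → ℂ)
    (hψ : ∀ j n1 n2 n3 n4, ψ j n1 n2 n3 n4 =
      ρp j * (a1 + k j) ^ n1 * (a2 + k j) ^ n2 * (a3 + k j) ^ n3 * (a4 + k j) ^ n4 +
      ρm j * (a1 - k j) ^ n1 * (a2 - k j) ^ n2 * (a3 - k j) ^ n3 * (a4 - k j) ^ n4)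
    (τ : ℤ → ℤ → ℤ → ℤ → ℂ)
    (hτ : ∀ n1 n2 n3 n4, τ n1 n2 n3 n4 =
      (Matrix.of fun j m : Fin N => ψ j (n1 + (m.1 : ℤ)) n2 n3 n4).det) :
    ∀ n1 n2 n3 n4 : ℤ,
      ((a2 - a3) * (a3 - a4) * (a2 - a4) * τ n1 n2 n3 n4 * τ (n1 + 1) (n2 + 1) (n3 + 1) (n4 + 1) -
        (a1 + a3) * (a3 - a4) * (a1 + a4) * τ (n1 + 1) (n2 + 1) n3 n4 * τ n1 n2 (n3 + 1) (n4 + 1) +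
        (a1 + a2) * (a2 - a4) * (a1 + a4) * τ (n1 + 1) n2 (n3 + 1) n4 * τ n1 (n2 + 1) n3 (n4 + 1) -
        (a1 + a2) * (a2 - a3) * (a1 + a3) * τ (n1 + 1) n2 n3 (n4 + 1) * τ n1 (n2 + 1) (n3 + 1) n4 = 0) ∧
      ((a2 + a3) * (a3 - a4) * (a2 + a4) * τ (n1 + 1) (n2 + 1) n3 n4 * τ n1 n2 (n3 + 1) (n4 + 1) -
        (a1 - a3) * (a3 - a4) * (a1 - a4) * τ n1 n2 n3 n4 * τ (n1 + 1) (n2 + 1) (n3 + 1) (n4 + 1) -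
        (a1 + a2) * (a2 + a4) * (a1 - a4) * τ n1 (n2 + 1) (n3 + 1) n4 * τ (n1 + 1) n2 n3 (n4 + 1) +
        (a1 + a2) * (a2 + a3) * (a1 - a3) * τ n1 (n2 + 1) n3 (n4 + 1) * τ (n1 + 1) n2 (n3 + 1) n4 = 0) ∧
      (-((a2 + a3) * (a3 + a4) * (a2 - a4)) * τ (n1 + 1) n2 (n3 + 1) n4 * τ n1 (n2 + 1) n3 (n4 + 1) +
        (a1 + a3) * (a3 + a4) * (a1 - a4) * τ n1 (n2 + 1) (n3 + 1) n4 * τ (n1 + 1) n2 n3 (n4 + 1) +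
        (a1 - a2) * (a2 - a4) * (a1 - a4) * τ n1 n2 n3 n4 * τ (n1 + 1) (n2 + 1) (n3 + 1) (n4 + 1) -
        (a1 - a2) * (a2 + a3) * (a1 + a3) * τ n1 n2 (n3 + 1) (n4 + 1) * τ (n1 + 1) (n2 + 1) n3 n4 = 0) ∧
      ((a2 - a3) * (a3 + a4) * (a2 + a4) * τ (n1 + 1) n2 n3 (n4 + 1) * τ n1 (n2 + 1) (n3 + 1) n4 -
        (a1 - a3) * (a3 + a4) * (a1 + a4) * τ n1 (n2 + 1) n3 (n4 + 1) * τ (n1 + 1) n2 (n3 + 1) n4 +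
        (a1 - a2) * (a2 + a4) * (a1 + a4) * τ n1 n2 (n3 + 1) (n4 + 1) * τ (n1 + 1) (n2 + 1) n3 n4 -
        (a1 - a2) * (a2 - a3) * (a1 - a3) * τ n1 n2 n3 n4 * τ (n1 + 1) (n2 + 1) (n3 + 1) (n4 + 1) = 0) := by
  obtain rfl : ψ = planeWave a1 a2 a3 a4 k ρp ρm := by
    funext j n1 n2 n3 n4
    exact hψ j n1 n2 n3 n4
  have hτ' : ∀ n1 n2 n3 n4,
      τ n1 n2 n3 n4 = casoratian (alongFirst (planeWave a1 a2 a3 a4 k ρp ρm) n1 n2 n3 n4) := hτ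
  intro n1 n2 n3 n4
  have M1 := casoratian_four_term (alongFirst (planeWave a1 a2 a3 a4 k ρp ρm) (n1 + 1) n2 n3 n4)
    (a1 - a2) (a1 - a3) (a1 - a4) (a1 + a1)
  have M2 := casoratian_four_term (alongFirst (planeWave a1 a2 a3 a4 k ρp ρm) n1 (n2 + 1) n3 n4)
    (a1 - a1) (a1 - a3) (a1 - a4) (a1 + a2)
  have M3 := casoratian_four_term (alongFirst (planeWave a1 a2 a3 a4 k ρp ρm) n1 n2 (n3 + 1) n4)
    (a1 - a1) (a1 - a2) (a1 - a4) (a1 + a3)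
  have M4 := casoratian_four_term (alongFirst (planeWave a1 a2 a3 a4 k ρp ρm) n1 n2 n3 (n4 + 1))
    (a1 - a1) (a1 - a2) (a1 - a3) (a1 + a4)
  simp only [shiftSub_sub_self_alongFirst, shiftSub_sub_alongFirst_planeWave_two ha1 ha1' ha2 ha2',
    shiftSub_sub_alongFirst_planeWave_three ha1 ha1' ha3 ha3',
    shiftSub_sub_alongFirst_planeWave_four ha1 ha1' ha4 ha4',
    shiftSub_add_alongFirst_planeWave_one ha1 ha1',
    shiftSub_add_alongFirst_planeWave_two ha1 ha1' ha2 ha2',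
    shiftSub_add_alongFirst_planeWave_three ha1 ha1' ha3 ha3',
    shiftSub_add_alongFirst_planeWave_four ha1 ha1' ha4 ha4', casoratian_mul, ← hτ'] at M1 M2 M3 M4
  refine ⟨mul_left_cancel₀ (prod_sq_sub_sq_ne_zero ha1 ha1') ?_,
    mul_left_cancel₀ (prod_sq_sub_sq_ne_zero ha2 ha2') ?_,
    mul_left_cancel₀ (prod_sq_sub_sq_ne_zero ha3 ha3') ?_,
    mul_left_cancel₀ (prod_sq_sub_sq_ne_zero ha4 ha4') ?_⟩
  · linear_combination -M1
  · linear_combination M2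
  · linear_combination -M3
  · linear_combination M4

theorem stmt_15 (N : ℕ) (hN : 1 ≤ N) (a1 a2 a3 a4 : ℂ) (k ρp ρm : Fin N → ℂ)
    (ha1 : ∀ j, a1 + k j ≠ 0) (ha1' : ∀ j, a1 - k j ≠ 0)
    (ha2 : ∀ j, a2 + k j ≠ 0) (ha2' : ∀ j, a2 - k j ≠ 0)
    (ha3 : ∀ j, a3 + k j ≠ 0) (ha3' : ∀ j, a3 - k j ≠ 0)
    (ha4 : ∀ j, a4 + k j ≠ 0) (ha4' : ∀ j, a4 - k j ≠ 0)
    (ψ : Fin N → ℤ → ℤ → ℤ → ℤ → ℂ)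
    (hψ : ∀ j n1 n2 n3 n4, ψ j n1 n2 n3 n4 =
      ρp j * (a1 + k j) ^ n1 * (a2 + k j) ^ n2 * (a3 + k j) ^ n3 * (a4 + k j) ^ n4 +
      ρm j * (a1 - k j) ^ n1 * (a2 - k j) ^ n2 * (a3 - k j) ^ n3 * (a4 - k j) ^ n4)
    (τ : ℤ → ℤ → ℤ → ℤ → ℂ)
    (hτ : ∀ n1 n2 n3 n4, τ n1 n2 n3 n4 =
      (Matrix.of fun j m : Fin N => ψ j (n1 + (m.1 : ℤ)) n2 n3 n4).det) :
    ∀ n1 n2 n3 n4 : ℤ,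
      ((a2 - a3) * (a3 - a4) * (a2 - a4) * τ n1 n2 n3 n4 * τ (n1 + 1) (n2 + 1) (n3 + 1) (n4 + 1) -
        (a1 + a3) * (a3 - a4) * (a1 + a4) * τ (n1 + 1) (n2 + 1) n3 n4 * τ n1 n2 (n3 + 1) (n4 + 1) +
        (a1 + a2) * (a2 - a4) * (a1 + a4) * τ (n1 + 1) n2 (n3 + 1) n4 * τ n1 (n2 + 1) n3 (n4 + 1) -
        (a1 + a2) * (a2 - a3) * (a1 + a3) * τ (n1 + 1) n2 n3 (n4 + 1) * τ n1 (n2 + 1) (n3 + 1) n4 = 0) ∧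
      ((a2 + a3) * (a3 - a4) * (a2 + a4) * τ (n1 + 1) (n2 + 1) n3 n4 * τ n1 n2 (n3 + 1) (n4 + 1) -
        (a1 - a3) * (a3 - a4) * (a1 - a4) * τ n1 n2 n3 n4 * τ (n1 + 1) (n2 + 1) (n3 + 1) (n4 + 1) -
        (a1 + a2) * (a2 + a4) * (a1 - a4) * τ n1 (n2 + 1) (n3 + 1) n4 * τ (n1 + 1) n2 n3 (n4 + 1) +
        (a1 + a2) * (a2 + a3) * (a1 - a3) * τ n1 (n2 + 1) n3 (n4 + 1) * τ (n1 + 1) n2 (n3 + 1) n4 = 0) ∧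
      (-((a2 + a3) * (a3 + a4) * (a2 - a4)) * τ (n1 + 1) n2 (n3 + 1) n4 * τ n1 (n2 + 1) n3 (n4 + 1) +
        (a1 + a3) * (a3 + a4) * (a1 - a4) * τ n1 (n2 + 1) (n3 + 1) n4 * τ (n1 + 1) n2 n3 (n4 + 1) +
        (a1 - a2) * (a2 - a4) * (a1 - a4) * τ n1 n2 n3 n4 * τ (n1 + 1) (n2 + 1) (n3 + 1) (n4 + 1) -
        (a1 - a2) * (a2 + a3) * (a1 + a3) * τ n1 n2 (n3 + 1) (n4 + 1) * τ (n1 + 1) (n2 + 1) n3 n4 = 0) ∧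
      ((a2 - a3) * (a3 + a4) * (a2 + a4) * τ (n1 + 1) n2 n3 (n4 + 1) * τ n1 (n2 + 1) (n3 + 1) n4 -
        (a1 - a3) * (a3 + a4) * (a1 + a4) * τ n1 (n2 + 1) n3 (n4 + 1) * τ (n1 + 1) n2 (n3 + 1) n4 +
        (a1 - a2) * (a2 + a4) * (a1 + a4) * τ n1 n2 (n3 + 1) (n4 + 1) * τ (n1 + 1) (n2 + 1) n3 n4 -
        (a1 - a2) * (a2 - a3) * (a1 - a3) * τ n1 n2 n3 n4 * τ (n1 + 1) (n2 + 1) (n3 + 1) (n4 + 1) = 0) :=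
  stmt_15_general N a1 a2 a3 a4 k ρp ρm ha1 ha1' ha2 ha2' ha3 ha3' ha4 ha4' ψ hψ τ hτ
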